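/- arXiv:2302.01852 — 5 statements merged into one kernel-verified Lean document; each statement's English description precedes it below -/
import Mathlib

section
/- Let P be a k-profile such that P contains an increasing chain of separations whose supremum is not in P. Then the set {S : λ(S) < ∞ and there exists α with (S ∩ Q) ∪ Q_α ∈ P} (where Q is the supremum of the chain (Q_α)) is a profile of the separations of finite order that induces P; in particular, for any two k-profiles P_1 ≠ P_2 with the same truncation P_0 to a (k−1)-profile, P_0 is limit-closed (contains the supremum of every chain of its elements). -/
open Set

/-- A symmetric set function: `λ(A) = λ(E \ A)`. -/
def SymmFn {E : Type*} (lam : Set E → ℕ∞) : Prop := ∀ A : Set E, lam Aᶜ = lam A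

/-- A submodular set function: `λ(A) + λ(B) ≥ λ(A ∪ B) + λ(A ∩ B)`. -/
def SubmodularFn {E : Type*} (lam : Set E → ℕ∞) : Prop :=
  ∀ A B : Set E, lam (A ∪ B) + lam (A ∩ B) ≤ lam A + lam B

/-- A limit-closed set function: the union of a (nonempty) chain of sets of connectivity at most
`k` again has connectivity at most `k`. -/
def LimitClosedFn {E : Type*} (lam : Set E → ℕ∞) : Prop :=
  ∀ (k : ℕ) (C : Set (Set E)), C.Nonempty → IsChain (· ⊆ ·) C →
    (∀ A ∈ C, lam A ≤ (k : ℕ∞)) → lam (⋃₀ C) ≤ (k : ℕ∞)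

/-- A profile for the connectivity system `(E, lam)` of the sets satisfying the eligibility
predicate `ord`: a consistent (downward-closed) orientation of the eligible sets satisfying the
profile property. -/
def IsProfileOn {E : Type*} (ord : Set E → Prop) (P : Set (Set E)) : Prop :=
  (∀ A ∈ P, ord A) ∧
  (∀ A : Set E, ord A → (A ∈ P ↔ Aᶜ ∉ P)) ∧
  (∀ A B : Set E, ord A → A ⊆ B → B ∈ P → A ∈ P) ∧
  (∀ A ∈ P, ∀ B ∈ P, (A ∪ B)ᶜ ∉ P)

/-!
Write `U = ⋃ α, Q α`. Limit-closedness gives `λ(U) < k`, so `U ∉ P` forces `Uᶜ ∈ P`; hence two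
sets covering `E` can never both have witnesses `(S ∩ U) ∪ Q α ∈ P`, as these would cover `U`.
Everything else rests on choosing `α` to minimize `λ((S ∩ U) ∪ Q α)` on a tail of the chain: by
submodularity the sets `(S ∩ U ∩ Q γ) ∪ Q α` for `γ ≥ α` then have order at most `λ(Q γ)`, and
they form a chain with union `(S ∩ U) ∪ Q α`, so this minimum is below every strict bound of the
`λ(Q γ)`. For the last claim, a chain in the common truncation whose union is missing from `P₁`
(hence from `P₂`) lets each `S ∈ P₁` be recovered from a witness of order `< k - 1`, which both
profiles share; so `P₁ = P₂`.
-/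

namespace SubmodularFn

variable {E : Type*} {lam : Set E → ℕ∞}

theorem union_ne_top (hsub : SubmodularFn lam) {A B : Set E} (hA : lam A ≠ ⊤) (hB : lam B ≠ ⊤) :
    lam (A ∪ B) ≠ ⊤ :=
  ne_top_of_le_ne_top (WithTop.add_ne_top.mpr ⟨hA, hB⟩) (le_self_add.trans (hsub A B))

theorem inter_ne_top (hsub : SubmodularFn lam) {A B : Set E} (hA : lam A ≠ ⊤) (hB : lam B ≠ ⊤) :
    lam (A ∩ B) ≠ ⊤ :=
  ne_top_of_le_ne_top (WithTop.add_ne_top.mpr ⟨hA, hB⟩) (le_add_self.trans (hsub A B))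

theorem inter_le_of_le_union (hsub : SubmodularFn lam) {A B : Set E} (hA : lam A ≠ ⊤)
    (h : lam A ≤ lam (A ∪ B)) : lam (A ∩ B) ≤ lam B :=
  (ENat.add_le_add_iff_left hA).1 <| (by gcongr : lam A + lam (A ∩ B) ≤ _).trans (hsub A B)

theorem inter_lt_of_lt_union (hsub : SubmodularFn lam) {A B : Set E} (hA : lam A ≠ ⊤)
    (h : lam B < lam (A ∪ B)) : lam (A ∩ B) < lam A := by
  have hB : lam B ≠ ⊤ := h.ne_top
  have hsAB := hsub A B
  lift lam (A ∩ B) to ℕ using hsub.inter_ne_top hA hB with c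
  lift lam (A ∪ B) to ℕ using hsub.union_ne_top hA hB with d
  lift lam A to ℕ using hA with a
  lift lam B to ℕ using hB with b
  norm_cast at *
  omega

end SubmodularFn

namespace LimitClosedFn

variable {E ι : Type*} {lam : Set E → ℕ∞}

theorem sUnion_lt (hlim : LimitClosedFn lam) {C : Set (Set E)} (hne : C.Nonempty)
    (hC : IsChain (· ⊆ ·) C) {j : ℕ} (h : ∀ A ∈ C, lam A < j) : lam (⋃₀ C) < j := by
  obtain ⟨A, hA⟩ := hne
  obtain ⟨i, rfl⟩ : ∃ i, j = i + 1 :=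
    Nat.exists_eq_add_one.2 (by exact_mod_cast pos_of_gt (h A hA))
  push_cast at h ⊢
  simp only [ENat.lt_natCast_add_one_iff] at h ⊢
  exact hlim i C ⟨A, hA⟩ hC h

variable [LinearOrder ι] {F : ι → Set E}

theorem iUnion_lt_of_monotone [Nonempty ι] (hlim : LimitClosedFn lam) (hF : Monotone F) {j : ℕ}
    (h : ∀ i, lam (F i) < j) : lam (⋃ i, F i) < j := by
  rw [← sUnion_range]
  exact hlim.sUnion_lt (range_nonempty F) hF.isChain_range (forall_mem_range.2 h)

theorem biUnion_lt_of_monotone (hlim : LimitClosedFn lam) (hF : Monotone F) {s : Set ι}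
    (hs : s.Nonempty) {j : ℕ} (h : ∀ i ∈ s, lam (F i) < j) : lam (⋃ i ∈ s, F i) < j := by
  have := hs.to_subtype
  rw [biUnion_eq_iUnion]
  exact hlim.iUnion_lt_of_monotone (hF.comp (Subtype.mono_coe s)) fun i => h i i.2

end LimitClosedFn

theorem SubmodularFn.inter_biUnion_lt {E ι : Type*} [LinearOrder ι] {lam : Set E → ℕ∞}
    (hsub : SubmodularFn lam) (hlim : LimitClosedFn lam) {F : ι → Set E} (hF : Monotone F)
    {s : Set ι} (hs : s.Nonempty) {A : Set E} (hA : lam A ≠ ⊤)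
    (h : ∀ i ∈ s, lam (F i) < lam (A ∪ F i)) : lam (A ∩ ⋃ i ∈ s, F i) < lam A := by
  obtain ⟨a, ha⟩ := ENat.ne_top_iff_exists.1 hA
  rw [inter_iUnion₂, ← ha]
  exact hlim.biUnion_lt_of_monotone (fun i j hij => inter_subset_inter_right A (hF hij)) hs
    fun i hi => ha ▸ hsub.inter_lt_of_lt_union hA (h i hi)

theorem Monotone.biUnion_eq_iUnion_of_cofinal {E ι : Type*} [Preorder ι] {F : ι → Set E}
    (hF : Monotone F) {s : Set ι} (hs : ∀ c, ∃ i, c ≤ i ∧ i ∈ s) : ⋃ i ∈ s, F i = ⋃ i, F i :=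
  (iUnion₂_subset fun i _ => subset_iUnion F i).antisymm <| iUnion_subset fun c =>
    let ⟨_, hci, hi⟩ := hs c
    (hF hci).trans (subset_biUnion_of_mem hi)

namespace IsProfileOn

variable {E : Type*} {ord : Set E → Prop} {P : Set (Set E)} {A B : Set E}

theorem compl_mem_of_notMem (hP : IsProfileOn ord P) (hA : ord A) (h : A ∉ P) : Aᶜ ∈ P :=
  not_not.1 fun h' => h ((hP.2.1 A hA).2 h')

theorem union_mem (hP : IsProfileOn ord P) (hA : A ∈ P) (hB : B ∈ P) (hAB : ord (A ∪ B)) :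
    A ∪ B ∈ P :=
  by_contra fun h => hP.2.2.2 A hA B hB (hP.compl_mem_of_notMem hAB h)

end IsProfileOn

theorem exists_minimizer_Ici {α β : Type*} [Preorder α] [LinearOrder β] [WellFoundedLT β]
    (f : α → β) (c : α) : ∃ a, c ≤ a ∧ ∀ b, c ≤ b → f a ≤ f b :=
  ⟨Function.argminOn f {b | c ≤ b} ⟨c, le_rfl⟩, Function.argminOn_mem .., fun _ hb =>
    Function.argminOn_le f _ hb⟩

section Chain

variable {E ι : Type*} {lam : Set E → ℕ∞} {k : ℕ} {P : Set (Set E)} {Q : ι → Set E}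

def Witnessed (P : Set (Set E)) (Q : ι → Set E) (S : Set E) : Prop :=
  ∃ α, (S ∩ ⋃ γ, Q γ) ∪ Q α ∈ P

theorem not_witnessed_of_compl_subset {ord : Set E → Prop} (hP : IsProfileOn ord P)
    (hU : (⋃ α, Q α)ᶜ ∈ P) {D C : Set E} (hDC : Dᶜ ⊆ C) (hD : Witnessed P Q D) :
    ¬Witnessed P Q C := by
  rintro ⟨γ, hC⟩
  obtain ⟨β, hD⟩ := hD
  refine hP.2.2.2 _ hD _ hC ?_
  convert hU using 2
  refine (union_subset (union_subset inter_subset_right (subset_iUnion Q β))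
    (union_subset inter_subset_right (subset_iUnion Q γ))).antisymm fun x hx => ?_
  by_cases hxD : x ∈ D
  · exact Or.inl (Or.inl ⟨hxD, hx⟩)
  · exact Or.inr (Or.inl ⟨hDC hxD, hx⟩)

variable [LinearOrder ι]

theorem compl_iUnion_mem [Nonempty ι] (hlim : LimitClosedFn lam)
    (hP : IsProfileOn (fun A => lam A < k) P) (hmono : Monotone Q) (hmem : ∀ α, Q α ∈ P)
    (hsup : (⋃ α, Q α) ∉ P) : (⋃ α, Q α)ᶜ ∈ P :=
  hP.compl_mem_of_notMem (hlim.iUnion_lt_of_monotone hmono fun α => hP.1 _ (hmem α)) hsup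

theorem lam_inter_union_le (hsub : SubmodularFn lam) (hmono : Monotone Q) {X : Set E} {β γ : ι}
    (hβγ : β ≤ γ) (hX : lam (X ∪ Q β) ≠ ⊤) (hle : lam (X ∪ Q β) ≤ lam (X ∪ Q γ)) :
    lam ((X ∩ Q γ) ∪ Q β) ≤ lam (Q γ) := by
  have hQ : Q β ⊆ Q γ := hmono hβγ
  have h := hsub.inter_le_of_le_union (B := Q γ) hX (by rwa [union_assoc, union_eq_right.2 hQ])
  rwa [union_inter_distrib_right, inter_eq_left.2 hQ] at h

theorem lam_union_lt_of_forall_le (hsub : SubmodularFn lam) (hlim : LimitClosedFn lam)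
    (hmono : Monotone Q) {X : Set E} (hXU : X ⊆ ⋃ γ, Q γ) (hX : lam X ≠ ⊤) {β : ι}
    (hmin : ∀ γ, β ≤ γ → lam (X ∪ Q β) ≤ lam (X ∪ Q γ)) {j : ℕ} (hj : ∀ γ, lam (Q γ) < j) :
    lam (X ∪ Q β) < j := by
  have hXβ : lam (X ∪ Q β) ≠ ⊤ := hsub.union_ne_top hX (hj β).ne_top
  have hlt : lam (⋃ γ ∈ Ici β, (X ∩ Q γ) ∪ Q β) < j :=
    hlim.biUnion_lt_of_monotone
      (fun _ _ h => union_subset_union_left _ (inter_subset_inter_right _ (hmono h)))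
      nonempty_Ici fun γ hγ => (lam_inter_union_le hsub hmono hγ hXβ (hmin γ hγ)).trans_lt (hj γ)
  have hunion : ⋃ γ ∈ Ici β, (X ∩ Q γ) ∪ Q β = X ∪ Q β := by
    have := (nonempty_Ici (a := β)).to_subtype
    have hcofinal : ∀ c, ∃ γ, c ≤ γ ∧ γ ∈ Ici β := fun c =>
      ⟨max β c, le_max_right _ _, le_max_left _ _⟩
    rw [biUnion_eq_iUnion, ← iUnion_union, ← biUnion_eq_iUnion (Ici β) fun γ _ => X ∩ Q γ,
      ← inter_iUnion₂, hmono.biUnion_eq_iUnion_of_cofinal hcofinal, inter_eq_left.2 hXU]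
  rwa [hunion] at hlt

theorem exists_witness_lt_of_mem [Nonempty ι] (hsub : SubmodularFn lam)
    (hlim : LimitClosedFn lam) (hP : IsProfileOn (fun A => lam A < k) P) (hmono : Monotone Q)
    (hmem : ∀ α, Q α ∈ P) {S : Set E} (hS : S ∈ P) {j : ℕ} (hj : ∀ γ, lam (Q γ) < j) :
    ∃ β, (S ∩ ⋃ γ, Q γ) ∪ Q β ∈ P ∧ lam ((S ∩ ⋃ γ, Q γ) ∪ Q β) < j := by
  have hSk : lam S < k := hP.1 S hS
  have hQk : ∀ γ, lam (Q γ) < k := fun γ => hP.1 _ (hmem γ)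
  have hX : lam (S ∩ ⋃ γ, Q γ) ≠ ⊤ :=
    hsub.inter_ne_top hSk.ne_top (hlim.iUnion_lt_of_monotone hmono hQk).ne_top
  obtain ⟨c, hc⟩ : ∃ c, ∀ β, c ≤ β → lam ((S ∩ ⋃ γ, Q γ) ∪ Q β) < k →
      (S ∩ ⋃ γ, Q γ) ∪ Q β ∈ P := by
    by_cases hsmall : ∃ c, ∀ γ, c ≤ γ → lam (S ∪ Q γ) < k
    · obtain ⟨c, hc⟩ := hsmall
      exact ⟨c, fun β hβ hlt => hP.2.2.1 _ _ hlt (union_subset_union_left _ inter_subset_left)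
        (hP.union_mem hS (hmem β) (hc β hβ))⟩
    · push Not at hsmall
      -- `S ∩ ⋃ Q` is exhausted by the sets `S ∩ Q γ` with `k ≤ λ(S ∪ Q γ)`, and by
      -- submodularity each of them has order less than `λ(S)`.
      have hlt := hsub.inter_biUnion_lt hlim hmono (s := {γ | k ≤ lam (S ∪ Q γ)})
        (let ⟨γ, _, hγ⟩ := hsmall (Classical.arbitrary ι); ⟨γ, hγ⟩) hSk.ne_top
        fun γ hγ => (hQk γ).trans_le hγ
      rw [hmono.biUnion_eq_iUnion_of_cofinal (s := {γ | k ≤ lam (S ∪ Q γ)}) hsmall] at hlt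
      have hXP : S ∩ ⋃ γ, Q γ ∈ P := hP.2.2.1 _ S (hlt.trans hSk) inter_subset_left hS
      exact ⟨Classical.arbitrary ι, fun β _ hβ => hP.union_mem hXP (hmem β) hβ⟩
  obtain ⟨β, hcβ, hmin⟩ := exists_minimizer_Ici (fun α => lam ((S ∩ ⋃ γ, Q γ) ∪ Q α)) c
  have hlt : ∀ {j : ℕ}, (∀ γ, lam (Q γ) < j) → lam ((S ∩ ⋃ γ, Q γ) ∪ Q β) < j :=
    lam_union_lt_of_forall_le hsub hlim hmono inter_subset_right hX
      fun γ hγ => hmin γ (hcβ.trans hγ)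
  exact ⟨β, hc β hcβ (hlt hQk), hlt hj⟩

theorem mem_of_witnessed [Nonempty ι] (hsub : SubmodularFn lam) (hlim : LimitClosedFn lam)
    (hP : IsProfileOn (fun A => lam A < k) P) (hmono : Monotone Q) (hmem : ∀ α, Q α ∈ P)
    (hU : (⋃ α, Q α)ᶜ ∈ P) {S : Set E} (hS : lam S < k) (hw : Witnessed P Q S) : S ∈ P := by
  by_contra h
  obtain ⟨β, hβ, -⟩ := exists_witness_lt_of_mem hsub hlim hP hmono hmem
    (hP.compl_mem_of_notMem hS h) fun γ => hP.1 _ (hmem γ)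
  exact not_witnessed_of_compl_subset hP hU subset_rfl hw ⟨β, hβ⟩

theorem Witnessed.exists_ge [Nonempty ι] (hsub : SubmodularFn lam) (hlim : LimitClosedFn lam)
    (hP : IsProfileOn (fun A => lam A < k) P) (hmono : Monotone Q) (hmem : ∀ α, Q α ∈ P)
    {S : Set E} (hS : lam S ≠ ⊤) (hw : Witnessed P Q S) (c : ι) :
    ∃ β, c ≤ β ∧ (S ∩ ⋃ γ, Q γ) ∪ Q β ∈ P := by
  obtain ⟨α, hα⟩ := hw
  have hQk : ∀ γ, lam (Q γ) < k := fun γ => hP.1 _ (hmem γ)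
  obtain ⟨β, hβ, hmin⟩ := exists_minimizer_Ici (fun α => lam ((S ∩ ⋃ γ, Q γ) ∪ Q α)) (max α c)
  have hlt : lam ((S ∩ ⋃ γ, Q γ) ∪ Q β) < k :=
    lam_union_lt_of_forall_le hsub hlim hmono inter_subset_right
      (hsub.inter_ne_top hS (hlim.iUnion_lt_of_monotone hmono hQk).ne_top)
      (fun γ hγ => hmin γ (hβ.trans hγ)) hQk
  have hαβ : (S ∩ ⋃ γ, Q γ) ∪ Q α ∪ Q β = (S ∩ ⋃ γ, Q γ) ∪ Q β := by
    rw [union_assoc, union_eq_right.2 (hmono (le_of_max_le_left hβ))]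
  exact ⟨β, le_of_max_le_right hβ, hαβ ▸ hP.union_mem hα (hmem β) (hαβ ▸ hlt)⟩

theorem Witnessed.union [Nonempty ι] (hsub : SubmodularFn lam) (hlim : LimitClosedFn lam)
    (hP : IsProfileOn (fun A => lam A < k) P) (hmono : Monotone Q) (hmem : ∀ α, Q α ∈ P)
    {S T : Set E} (hS : Witnessed P Q S) (hT : lam T ≠ ⊤) (hTw : Witnessed P Q T) :
    Witnessed P Q (S ∪ T) := by
  obtain ⟨α, hα⟩ := hS
  set A := (S ∩ ⋃ γ, Q γ) ∪ Q α
  set F : ι → Set E := fun β => (T ∩ ⋃ γ, Q γ) ∪ Q β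
  set s : Set ι := {β | α ≤ β ∧ F β ∈ P}
  have hF : Monotone F := fun _ _ h => union_subset_union_right _ (hmono h)
  have hunion : ∀ β ∈ s, A ∪ F β = ((S ∪ T) ∩ ⋃ γ, Q γ) ∪ Q β := fun β hβ => by
    rw [union_union_union_comm, ← union_inter_distrib_right, union_eq_right.2 (hmono hβ.1)]
  have hcofinal : ∀ c, ∃ β, c ≤ β ∧ β ∈ s := fun c =>
    let ⟨β, hβ, hβP⟩ := hTw.exists_ge hsub hlim hP hmono hmem hT (max α c)
    ⟨β, le_of_max_le_right hβ, le_of_max_le_left hβ, hβP⟩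
  by_contra hno
  -- Each `A ∩ F β` has smaller order than `A`, but these sets exhaust `A`.
  have hlt := hsub.inter_biUnion_lt hlim hF
    (let ⟨β, _, hβ⟩ := hcofinal α; ⟨β, hβ⟩) (hP.1 A hα).ne_top fun β hβ => by
      refine (hP.1 _ hβ.2).trans_le (not_lt.1 fun h => hno ⟨β, ?_⟩)
      rw [← hunion β hβ]
      exact hP.union_mem hα hβ.2 (hunion β hβ ▸ h)
  have hAF : A ⊆ ⋃ β ∈ s, F β :=
    calc A ⊆ ⋃ γ, Q γ := union_subset inter_subset_right (subset_iUnion Q α)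
      _ = ⋃ β ∈ s, Q β := (hmono.biUnion_eq_iUnion_of_cofinal hcofinal).symm
      _ ⊆ ⋃ β ∈ s, F β := biUnion_mono subset_rfl fun _ _ => subset_union_right
  rw [inter_eq_left.2 hAF] at hlt
  exact hlt.false

theorem witnessed_or_witnessed_compl [Nonempty ι] (hsub : SubmodularFn lam)
    (hlim : LimitClosedFn lam) (hP : IsProfileOn (fun A => lam A < k) P) (hmono : Monotone Q)
    (hmem : ∀ α, Q α ∈ P) {S : Set E} (hS : lam S ≠ ⊤) (hSc : lam Sᶜ ≠ ⊤) :
    Witnessed P Q S ∨ Witnessed P Q Sᶜ := by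
  by_contra h
  obtain ⟨hSw, hScw⟩ := not_or.1 h
  set U := ⋃ γ, Q γ
  have hQk : ∀ γ, lam (Q γ) < k := fun γ => hP.1 _ (hmem γ)
  have hU : lam U ≠ ⊤ := (hlim.iUnion_lt_of_monotone hmono hQk).ne_top
  obtain ⟨β, hβ, hminX⟩ := exists_minimizer_Ici (fun γ => lam ((S ∩ U) ∪ Q γ))
    (Classical.arbitrary ι)
  have hM : lam ((S ∩ U) ∪ Q β) < k := lam_union_lt_of_forall_le hsub hlim hmono
    inter_subset_right (hsub.inter_ne_top hS hU) (fun γ hγ => hminX γ (hβ.trans hγ)) hQk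
  obtain ⟨δ, hβδ, hminY⟩ := exists_minimizer_Ici (fun γ => lam ((Sᶜ ∩ U) ∪ Q γ)) β
  have hH : lam ((Sᶜ ∩ U) ∪ Q δ) < k := lam_union_lt_of_forall_le hsub hlim hmono
    inter_subset_right (hsub.inter_ne_top hSc hU) (fun γ hγ => hminY γ (hβδ.trans hγ)) hQk
  -- The minimal choice of `β` makes `((S ∩ U) ∪ Q β) ∩ ((Sᶜ ∩ U) ∪ Q δ)` of order at most
  -- `λ(Q δ)`, so it lies in `P`, against the profile property for the complements of both sets.
  have hcorner : (S ∩ U ∩ Q δ) ∪ Q β ∈ P :=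
    hP.2.2.1 _ (Q δ) ((lam_inter_union_le hsub hmono hβδ hM.ne_top
      (hminX δ (hβ.trans hβδ))).trans_lt (hQk δ))
      (union_subset inter_subset_right (hmono hβδ)) (hmem δ)
  refine hP.2.2.2 _ (hP.compl_mem_of_notMem hM fun h => hSw ⟨β, h⟩) _
    (hP.compl_mem_of_notMem hH fun h => hScw ⟨δ, h⟩) ?_
  convert hcorner using 1
  have hQβδ : Q β ⊆ Q δ := hmono hβδ
  ext x
  simp only [compl_union, mem_inter_iff, mem_union, mem_compl_iff]
  have := @hQβδ x
  tauto

theorem isProfileOn_witnessed [Nonempty ι] (hsym : SymmFn lam) (hsub : SubmodularFn lam)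
    (hlim : LimitClosedFn lam) (hP : IsProfileOn (fun A => lam A < k) P) (hmono : Monotone Q)
    (hmem : ∀ α, Q α ∈ P) (hU : (⋃ α, Q α)ᶜ ∈ P) :
    IsProfileOn (fun A => lam A < ⊤) {S | lam S < ⊤ ∧ Witnessed P Q S} := by
  have hcompl : ∀ A : Set E, lam A < ⊤ → lam Aᶜ < ⊤ := fun A hA => (hsym A).symm ▸ hA
  have hdichotomy : ∀ A : Set E, lam A < ⊤ → Witnessed P Q A ∨ Witnessed P Q Aᶜ :=
    fun A hA => witnessed_or_witnessed_compl hsub hlim hP hmono hmem hA.ne (hcompl A hA).ne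
  refine ⟨fun A hA => hA.1, fun A hA => ⟨?_, ?_⟩, fun A B hA hAB hB => ?_, ?_⟩
  · exact fun h h' => not_witnessed_of_compl_subset hP hU subset_rfl h.2 h'.2
  · exact fun h => ⟨hA, (hdichotomy A hA).resolve_right fun h' => h ⟨hcompl A hA, h'⟩⟩
  · exact ⟨hA, (hdichotomy A hA).resolve_right
      (not_witnessed_of_compl_subset hP hU (compl_subset_compl.2 hAB) hB.2)⟩
  · rintro A hA B hB ⟨-, hAB⟩
    exact not_witnessed_of_compl_subset hP hU subset_rfl
      (hA.2.union hsub hlim hP hmono hmem hB.1.ne hB.2) hAB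

theorem witnessed_iff_mem [Nonempty ι] (hsub : SubmodularFn lam) (hlim : LimitClosedFn lam)
    (hP : IsProfileOn (fun A => lam A < k) P) (hmono : Monotone Q) (hmem : ∀ α, Q α ∈ P)
    (hU : (⋃ α, Q α)ᶜ ∈ P) {S : Set E} (hS : lam S < k) : Witnessed P Q S ↔ S ∈ P :=
  ⟨mem_of_witnessed hsub hlim hP hmono hmem hU hS, fun h =>
    (exists_witness_lt_of_mem hsub hlim hP hmono hmem h fun γ => hP.1 _ (hmem γ)).imp
      fun _ => And.left⟩

theorem IsProfileOn.subset_of_truncation_subset [Nonempty ι] (hsub : SubmodularFn lam)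
    (hlim : LimitClosedFn lam) {P₁ P₂ : Set (Set E)} (h₁ : IsProfileOn (fun A => lam A < k) P₁)
    (h₂ : IsProfileOn (fun A => lam A < k) P₂) {n : ℕ}
    (htr : {S ∈ P₁ | lam S < n} ⊆ {S ∈ P₂ | lam S < n}) (hmono : Monotone Q)
    (hmem : ∀ α, Q α ∈ {S ∈ P₁ | lam S < n}) (hsup : (⋃ α, Q α) ∉ P₂) : P₁ ⊆ P₂ := by
  have hmem₂ : ∀ α, Q α ∈ P₂ := fun α => (htr (hmem α)).1
  intro A hA
  obtain ⟨β, hβ, hβn⟩ := exists_witness_lt_of_mem hsub hlim h₁ hmono (fun α => (hmem α).1) hA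
    fun α => (hmem α).2
  exact mem_of_witnessed hsub hlim h₂ hmono hmem₂ (compl_iUnion_mem hlim h₂ hmono hmem₂ hsup)
    (h₁.1 A hA) ⟨β, (htr ⟨hβ, hβn⟩).1⟩

end Chain

theorem IsProfileOn.sUnion_mem_truncation_of_ne {E : Type*} {lam : Set E → ℕ∞}
    (hsub : SubmodularFn lam) (hlim : LimitClosedFn lam) {k n : ℕ} {P₁ P₂ : Set (Set E)}
    (h₁ : IsProfileOn (fun A => lam A < k) P₁) (h₂ : IsProfileOn (fun A => lam A < k) P₂)
    (hne : P₁ ≠ P₂) (htr : {S ∈ P₁ | lam S < n} = {S ∈ P₂ | lam S < n}) {𝒞 : Set (Set E)}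
    (h𝒞 : 𝒞.Nonempty) (hchain : IsChain (· ⊆ ·) 𝒞) (h𝒞P : 𝒞 ⊆ {S ∈ P₁ | lam S < n}) :
    ⋃₀ 𝒞 ∈ {S ∈ P₁ | lam S < n} := by
  have hlt : lam (⋃₀ 𝒞) < n := hlim.sUnion_lt h𝒞 hchain fun A hA => (h𝒞P hA).2
  refine ⟨by_contra fun h₁U => hne ?_, hlt⟩
  have h₂U : ⋃₀ 𝒞 ∉ P₂ := fun h => h₁U (htr.ge ⟨h, hlt⟩).1
  classical
  let := hchain.linearOrder
  have := h𝒞.to_subtype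
  have hmono : Monotone ((↑) : 𝒞 → Set E) := fun _ _ h => h
  have hU : ⋃ A : 𝒞, (A : Set E) = ⋃₀ 𝒞 := sUnion_eq_iUnion.symm
  exact (h₁.subset_of_truncation_subset hsub hlim h₂ htr.le hmono (fun A => h𝒞P A.2)
    (hU ▸ h₂U)).antisymm (h₂.subset_of_truncation_subset hsub hlim h₁ htr.ge hmono
    (fun A => htr.le (h𝒞P A.2)) (hU ▸ h₁U))

theorem stmt13_general {E : Type*} {ι : Type*} [LinearOrder ι] [Nonempty ι]
    (lam : Set E → ℕ∞)
    (hsym : SymmFn lam) (hsub : SubmodularFn lam) (hlim : LimitClosedFn lam)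
    (k : ℕ)
    (P : Set (Set E)) (hP : IsProfileOn (fun A => lam A < (k : ℕ∞)) P)
    (Q : ι → Set E) (hmono : Monotone Q) (hmem : ∀ α, Q α ∈ P)
    (hsup : (⋃ α, Q α) ∉ P) :
    IsProfileOn (fun A => lam A < ⊤)
      {S : Set E | lam S < ⊤ ∧ ∃ α, (S ∩ ⋃ γ, Q γ) ∪ Q α ∈ P} ∧
    (∀ S : Set E, lam S < (k : ℕ∞) →
      (S ∈ {S : Set E | lam S < ⊤ ∧ ∃ α, (S ∩ ⋃ γ, Q γ) ∪ Q α ∈ P} ↔ S ∈ P)) ∧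
    (∀ P₁ P₂ : Set (Set E),
      IsProfileOn (fun A => lam A < (k : ℕ∞)) P₁ →
      IsProfileOn (fun A => lam A < (k : ℕ∞)) P₂ → P₁ ≠ P₂ →
      {S ∈ P₁ | lam S < ((k - 1 : ℕ) : ℕ∞)} = {S ∈ P₂ | lam S < ((k - 1 : ℕ) : ℕ∞)} →
      ∀ 𝒞 : Set (Set E), 𝒞.Nonempty → IsChain (· ⊆ ·) 𝒞 →
        𝒞 ⊆ {S ∈ P₁ | lam S < ((k - 1 : ℕ) : ℕ∞)} →
        ⋃₀ 𝒞 ∈ {S ∈ P₁ | lam S < ((k - 1 : ℕ) : ℕ∞)}) := by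
  have hU := compl_iUnion_mem hlim hP hmono hmem hsup
  refine ⟨isProfileOn_witnessed hsym hsub hlim hP hmono hmem hU, fun S hS => ?_,
    fun P₁ P₂ h₁ h₂ hne htr _ h𝒞 hchain h𝒞P =>
      h₁.sUnion_mem_truncation_of_ne hsub hlim h₂ hne htr h𝒞 hchain h𝒞P⟩
  exact (and_iff_right (hS.trans_le le_top)).trans
    (witnessed_iff_mem hsub hlim hP hmono hmem hU hS)

/-- Given a `k`-profile `P` containing an increasing chain `(Q α)` whose union is not in `P`,
the family `{S | λ(S) < ∞ ∧ ∃ α, (S ∩ Q) ∪ Q α ∈ P}` is a profile of the sets of finite order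
inducing `P`; in particular, the common truncation of two distinct `k`-profiles to a
`(k-1)`-profile is limit-closed. -/
theorem stmt13 {E : Type*} {ι : Type*} [LinearOrder ι] [WellFoundedLT ι] [Nonempty ι]
    (lam : Set E → ℕ∞)
    (hsym : SymmFn lam) (hsub : SubmodularFn lam) (hlim : LimitClosedFn lam)
    (k : ℕ) (hk : 1 ≤ k)
    (P : Set (Set E)) (hP : IsProfileOn (fun A => lam A < (k : ℕ∞)) P)
    (Q : ι → Set E) (hmono : Monotone Q) (hmem : ∀ α, Q α ∈ P)
    (hsup : (⋃ α, Q α) ∉ P) :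
    IsProfileOn (fun A => lam A < ⊤)
      {S : Set E | lam S < ⊤ ∧ ∃ α, (S ∩ ⋃ γ, Q γ) ∪ Q α ∈ P} ∧
    (∀ S : Set E, lam S < (k : ℕ∞) →
      (S ∈ {S : Set E | lam S < ⊤ ∧ ∃ α, (S ∩ ⋃ γ, Q γ) ∪ Q α ∈ P} ↔ S ∈ P)) ∧
    (∀ P₁ P₂ : Set (Set E),
      IsProfileOn (fun A => lam A < (k : ℕ∞)) P₁ →
      IsProfileOn (fun A => lam A < (k : ℕ∞)) P₂ → P₁ ≠ P₂ →
      {S ∈ P₁ | lam S < ((k - 1 : ℕ) : ℕ∞)} = {S ∈ P₂ | lam S < ((k - 1 : ℕ) : ℕ∞)} →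
      ∀ 𝒞 : Set (Set E), 𝒞.Nonempty → IsChain (· ⊆ ·) 𝒞 →
        𝒞 ⊆ {S ∈ P₁ | lam S < ((k - 1 : ℕ) : ℕ∞)} →
        ⋃₀ 𝒞 ∈ {S ∈ P₁ | lam S < ((k - 1 : ℕ) : ℕ∞)}) :=
  stmt13_general lam hsym hsub hlim k P hP Q hmono hmem hsup
end

section
/- Let E be a ground set, 𝒫 a nonempty set of regular k-profiles of a submodular universe 𝒰 all having the same truncation, and φ : S_k → 2^𝒫 the map sending a separation p to the set of profiles in 𝒫 containing the inverse of p. Then φ respects the involution (φ(p*) = 𝒫 \ φ(p)), the partial order (p ≤ q implies φ(p) ⊆ φ(q)), and joins (if p ∨ q ∈ S_k then φ(p ∨ q) = φ(p) ∪ φ(q)). -/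
open Set

variable {α : Type*}

/-- `star` is an order-reversing involution on the lattice `α` (making `α` a universe of
separations). -/
def IsUnivStar [Lattice α] (star : α → α) : Prop :=
  (∀ a, star (star a) = a) ∧ ∀ a b, a ≤ b → star b ≤ star a

/-- `ord` is an order function on the universe: symmetric under `star` and submodular. -/
def IsOrderFn [Lattice α] (star : α → α) (ord : α → ℕ∞) : Prop :=
  (∀ a, ord (star a) = ord a) ∧ ∀ a b, ord (a ⊔ b) + ord (a ⊓ b) ≤ ord a + ord b

/-- A (regular) `k`-profile of the universe: a strongly consistent orientation of the separations
of order `< k` satisfying the profile property. -/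
def IsProfileU [Lattice α] (star : α → α) (ord : α → ℕ∞) (k : ℕ) (P : Set α) : Prop :=
  (∀ a ∈ P, ord a < (k : ℕ∞)) ∧
  (∀ a, ord a < (k : ℕ∞) → (a ∈ P ↔ star a ∉ P)) ∧
  (∀ a b : α, ord a < (k : ℕ∞) → a ≤ b → b ∈ P → a ∈ P) ∧
  (∀ a ∈ P, ∀ b ∈ P, ord (a ⊔ b) < (k : ℕ∞) → star (a ⊔ b) ∉ P)

/-- `phi star Ps p` is the set of profiles in `Ps` that contain the inverse of `p`. -/
def phi [Lattice α] (star : α → α) (Ps : Set (Set α)) (p : α) : Set (Set α) :=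
  {P ∈ Ps | star p ∈ P}

/-- The map `φ` respects the involution, the partial order and joins. -/
theorem stmt14 [Lattice α] (star : α → α) (ord : α → ℕ∞)
    (hstar : IsUnivStar star) (hord : IsOrderFn star ord)
    (k : ℕ) (Ps : Set (Set α)) (hPs : Ps.Nonempty)
    (hprof : ∀ P ∈ Ps, IsProfileU star ord k P)
    (htrunc : ∀ P₁ ∈ Ps, ∀ P₂ ∈ Ps,
      {a ∈ P₁ | ord a < ((k - 1 : ℕ) : ℕ∞)} = {a ∈ P₂ | ord a < ((k - 1 : ℕ) : ℕ∞)}) :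
    (∀ p : α, ord p < (k : ℕ∞) → phi star Ps (star p) = Ps \ phi star Ps p) ∧
    (∀ p q : α, ord p < (k : ℕ∞) → ord q < (k : ℕ∞) → p ≤ q →
      phi star Ps p ⊆ phi star Ps q) ∧
    (∀ p q : α, ord p < (k : ℕ∞) → ord q < (k : ℕ∞) → ord (p ⊔ q) < (k : ℕ∞) →
      phi star Ps (p ⊔ q) = phi star Ps p ∪ phi star Ps q) := by
  obtain ⟨hinv, hmono⟩ := hstar
  have hle : ∀ p q : α, ord p < (k : ℕ∞) → ord q < (k : ℕ∞) → p ≤ q →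
      phi star Ps p ⊆ phi star Ps q := by
    intro p q hp hq hpq P hP
    obtain ⟨hPmem, hsp⟩ := hP
    obtain ⟨h1, h2, h3, h4⟩ := hprof P hPmem
    exact ⟨hPmem, h3 _ _ (by rw [hord.1]; exact hq) (hmono _ _ hpq) hsp⟩
  refine ⟨?_, hle, ?_⟩
  · intro p hp
    ext P
    simp only [phi, Set.mem_setOf_eq, Set.mem_diff, hinv]
    constructor
    · rintro ⟨hPmem, hpP⟩
      refine ⟨hPmem, fun h => ?_⟩
      exact ((hprof P hPmem).2.1 p hp).mp hpP h.2
    · rintro ⟨hPmem, h⟩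
      exact ⟨hPmem, ((hprof P hPmem).2.1 p hp).mpr (fun hs => h ⟨hPmem, hs⟩)⟩
  · intro p q hp hq hpq
    apply Set.Subset.antisymm
    · intro P hP
      obtain ⟨hPmem, hs⟩ := hP
      obtain ⟨h1, h2, h3, h4⟩ := hprof P hPmem
      by_contra hc
      simp only [Set.mem_union, phi, Set.mem_setOf_eq, not_or, not_and] at hc
      have hpP : p ∈ P := (h2 p hp).mpr (hc.1 hPmem)
      have hqP : q ∈ P := (h2 q hq).mpr (hc.2 hPmem)
      exact h4 p hpP q hqP hpq hs
    · exact Set.union_subset (hle p _ hp hpq le_sup_left) (hle q _ hq hpq le_sup_right)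
end

section
/- With φ as above: if p and q are separations of order k−1 such that φ(p) ∩ φ(q) ∉ {∅, 𝒫}, then p ∨ q has order at most k−1 (so p ∨ q ∈ S_k). -/
open Set

variable {α : Type*}

/-!
Pick a profile `P` containing `p*` and `q*`, and a profile `Q` missing one of them, so that `Q`
contains `p` or `q`. If `p ∨ q` had order `≥ k`, submodularity would push the order of `p ∧ q`
below `k - 1`. Then `p ∧ q ∈ Q` by consistency, hence `p ∧ q ∈ P` because the profiles agree
below `k - 1`; but the profile property of `P`, applied to `p*, q* ∈ P`, excludes
`(p* ∨ q*)* = p ∧ q`.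
-/

namespace IsUnivStar

variable [Lattice α] {star : α → α}

lemma star_star (h : IsUnivStar star) (a : α) : star (star a) = a := h.1 a

lemma star_le_star (h : IsUnivStar star) {a b : α} (hab : a ≤ b) : star b ≤ star a :=
  h.2 a b hab

lemma star_inf (h : IsUnivStar star) (a b : α) : star (a ⊓ b) = star a ⊔ star b := by
  refine le_antisymm ?_ (sup_le (h.star_le_star inf_le_left) (h.star_le_star inf_le_right))
  have hle : star (star a ⊔ star b) ≤ a ⊓ b := by
    refine le_inf ?_ ?_
    · simpa only [h.star_star] using h.star_le_star (le_sup_left : star a ≤ star a ⊔ star b)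
    · simpa only [h.star_star] using h.star_le_star (le_sup_right : star b ≤ star a ⊔ star b)
  simpa only [h.star_star] using h.star_le_star hle

end IsUnivStar

lemma IsOrderFn.ord_inf_lt_of_lt_ord_sup [Lattice α] {star : α → α} {ord : α → ℕ∞}
    (hord : IsOrderFn star ord) {a b : α} {n : ℕ} (ha : ord a ≤ n) (hb : ord b ≤ n)
    (hsup : (n : ℕ∞) < ord (a ⊔ b)) : ord (a ⊓ b) < n := by
  by_contra! hinf
  have h : (n : ℕ∞) + 1 + n ≤ n + n :=
    calc (n : ℕ∞) + 1 + n ≤ ord (a ⊔ b) + ord (a ⊓ b) :=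
          add_le_add (Order.add_one_le_of_lt hsup) hinf
      _ ≤ ord a + ord b := hord.2 a b
      _ ≤ n + n := add_le_add ha hb
  norm_cast at h
  omega

namespace IsProfileU

variable [Lattice α] {star : α → α} {ord : α → ℕ∞} {k : ℕ} {P : Set α}

lemma ord_lt_of_star_mem (hord : IsOrderFn star ord) (hP : IsProfileU star ord k P) {a : α}
    (ha : star a ∈ P) : ord a < k :=
  hord.1 a ▸ hP.1 _ ha

lemma inf_mem_of_star_notMem (hP : IsProfileU star ord k P) {a b : α} (ha : ord a < k)
    (hb : ord b < k) (hab : ord (a ⊓ b) < k) (h : star a ∉ P ∨ star b ∉ P) : a ⊓ b ∈ P := by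
  rcases h with h | h
  · exact hP.2.2.1 _ a hab inf_le_left ((hP.2.1 a ha).2 h)
  · exact hP.2.2.1 _ b hab inf_le_right ((hP.2.1 b hb).2 h)

lemma inf_notMem_of_star_mem (hstar : IsUnivStar star) (hord : IsOrderFn star ord)
    (hP : IsProfileU star ord k P) {a b : α} (ha : star a ∈ P) (hb : star b ∈ P)
    (hab : ord (a ⊓ b) < k) : a ⊓ b ∉ P := by
  have h := hP.2.2.2 _ ha _ hb (by rwa [← hstar.star_inf, hord.1])
  rwa [← hstar.star_inf, hstar.star_star] at h

end IsProfileU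

theorem stmt15_general [Lattice α] (star : α → α) (ord : α → ℕ∞)
    (hstar : IsUnivStar star) (hord : IsOrderFn star ord)
    (k : ℕ) (Ps : Set (Set α))
    (hprof : ∀ P ∈ Ps, IsProfileU star ord k P)
    (htrunc : ∀ P₁ ∈ Ps, ∀ P₂ ∈ Ps,
      {a ∈ P₁ | ord a < ((k - 1 : ℕ) : ℕ∞)} = {a ∈ P₂ | ord a < ((k - 1 : ℕ) : ℕ∞)})
    (p q : α) (hp : ord p = ((k - 1 : ℕ) : ℕ∞)) (hq : ord q = ((k - 1 : ℕ) : ℕ∞))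
    (hne : phi star Ps p ∩ phi star Ps q ≠ ∅)
    (hnePs : phi star Ps p ∩ phi star Ps q ≠ Ps) :
    ord (p ⊔ q) ≤ ((k - 1 : ℕ) : ℕ∞) := by
  obtain ⟨P, ⟨hP, hpP⟩, -, hqP⟩ := nonempty_iff_ne_empty.2 hne
  obtain ⟨Q, hQ, hpqQ⟩ : ∃ Q ∈ Ps, Q ∉ phi star Ps p ∩ phi star Ps q := by
    by_contra! h
    exact hnePs (Subset.antisymm (fun X hX => hX.1.1) h)
  have hpqQ' : star p ∉ Q ∨ star q ∉ Q := by
    simpa only [phi, mem_inter_iff, mem_sep_iff, hQ, true_and, not_and_or] using hpqQ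
  by_contra! hsup
  have hinf : ord (p ⊓ q) < ((k - 1 : ℕ) : ℕ∞) := hord.ord_inf_lt_of_lt_ord_sup hp.le hq.le hsup
  have hinfk : ord (p ⊓ q) < k := hinf.trans_le (by exact_mod_cast k.sub_le 1)
  have hinfQ : p ⊓ q ∈ Q := (hprof Q hQ).inf_mem_of_star_notMem
    ((hprof P hP).ord_lt_of_star_mem hord hpP) ((hprof P hP).ord_lt_of_star_mem hord hqP)
    hinfk hpqQ'
  have hinfP : p ⊓ q ∈ P := by
    have h : p ⊓ q ∈ {a ∈ Q | ord a < ((k - 1 : ℕ) : ℕ∞)} := ⟨hinfQ, hinf⟩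
    rw [htrunc Q hQ P hP] at h
    exact h.1
  exact (hprof P hP).inf_notMem_of_star_mem hstar hord hpP hqP hinfk hinfP

/-- If `p` and `q` have order `k - 1` and `φ(p) ∩ φ(q) ∉ {∅, 𝒫}`, then `p ⊔ q` has order at
most `k - 1`. -/
theorem stmt15 [Lattice α] (star : α → α) (ord : α → ℕ∞)
    (hstar : IsUnivStar star) (hord : IsOrderFn star ord)
    (k : ℕ) (hk : 1 ≤ k) (Ps : Set (Set α)) (hPs : Ps.Nonempty)
    (hprof : ∀ P ∈ Ps, IsProfileU star ord k P)
    (htrunc : ∀ P₁ ∈ Ps, ∀ P₂ ∈ Ps,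
      {a ∈ P₁ | ord a < ((k - 1 : ℕ) : ℕ∞)} = {a ∈ P₂ | ord a < ((k - 1 : ℕ) : ℕ∞)})
    (p q : α) (hp : ord p = ((k - 1 : ℕ) : ℕ∞)) (hq : ord q = ((k - 1 : ℕ) : ℕ∞))
    (hne : phi star Ps p ∩ phi star Ps q ≠ ∅)
    (hnePs : phi star Ps p ∩ phi star Ps q ≠ Ps) :
    ord (p ⊔ q) ≤ ((k - 1 : ℕ) : ℕ∞) :=
  stmt15_general star ord hstar hord k Ps hprof htrunc p q hp hq hne hnePs
end

section
/- Let ℬ be a set of nontrivial subsets of a ground set E forming a separation system (closed under complements, not containing ∅ or E) such that the union of any two crossing elements of ℬ is again in ℬ. Let V be a crossing-class of ℬ (an element of the finest partition 𝒱 of the non-nested part of ℬ into classes such that elements of distinct classes are nested). Then for every S ∈ ℬ \ V, either S or its complement points towards all elements of V (i.e., is contained in or disjoint from each element of V consistently), equivalently some orientation of S is contained in a single equivalence class of the relation ∼_V on E (where e ∼_V f iff no element of V separates e from f). -/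
open Set

/-- Two subsets of `E` are nested if one contains the other, they are disjoint, or they cover
`E`. -/
def NestedSets {E : Type*} (A B : Set E) : Prop :=
  A ⊆ B ∨ B ⊆ A ∨ A ∩ B = ∅ ∨ A ∪ B = univ

/-- Two subsets cross if they are not nested. -/
def CrossSets {E : Type*} (A B : Set E) : Prop := ¬ NestedSets A B

/-- Let `ℬ` be a separation system of bipartitions closed under unions of crossing elements, and
let `V` be a crossing-class of `ℬ` (the class of `S₀` under the equivalence generated by
crossing). Then every `S ∈ ℬ \ V` has an orientation pointing towards all elements of `V`. -/
theorem stmt16 {E : Type*} (ℬ : Set (Set E))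
    (hempty : ∅ ∉ ℬ) (huniv : univ ∉ ℬ)
    (hcompl : ∀ A ∈ ℬ, Aᶜ ∈ ℬ)
    (hcross : ∀ A ∈ ℬ, ∀ B ∈ ℬ, CrossSets A B → A ∪ B ∈ ℬ)
    (S₀ : Set E) (hS₀ : S₀ ∈ ℬ) (hS₀c : ∃ T ∈ ℬ, CrossSets S₀ T)
    (V : Set (Set E))
    (hV : V = {S | S ∈ ℬ ∧
      Relation.ReflTransGen (fun A B => A ∈ ℬ ∧ B ∈ ℬ ∧ CrossSets A B) S₀ S})
    (S : Set E) (hS : S ∈ ℬ) (hSV : S ∉ V) :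
    (∀ T ∈ V, S ⊆ T ∨ S ⊆ Tᶜ) ∨ (∀ T ∈ V, Sᶜ ⊆ T ∨ Sᶜ ⊆ Tᶜ) := by
  have crossSymm : ∀ A B : Set E, CrossSets A B → CrossSets B A := by
    intro A B h hn
    apply h
    rcases hn with h1 | h2 | h3 | h4
    · exact Or.inr (Or.inl h1)
    · exact Or.inl h2
    · exact Or.inr (Or.inr (Or.inl (by rwa [Set.inter_comm])))
    · exact Or.inr (Or.inr (Or.inr (by rwa [Set.union_comm])))
  have hmem : ∀ T ∈ V, (S ⊆ T ∨ S ⊆ Tᶜ) ∨ (Sᶜ ⊆ T ∨ Sᶜ ⊆ Tᶜ) := by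
    intro T hT
    have hnest : NestedSets S T := by
      by_contra hc
      apply hSV
      rw [hV] at hT ⊢
      exact ⟨hS, hT.2.tail ⟨hT.1, hS, crossSymm _ _ hc⟩⟩
    rcases hnest with h | h | h | h
    · exact Or.inl (Or.inl h)
    · exact Or.inr (Or.inr (Set.compl_subset_compl.mpr h))
    · exact Or.inl (Or.inr (by
        rw [Set.subset_compl_iff_disjoint_right, Set.disjoint_iff_inter_eq_empty]
        exact h))
    · exact Or.inr (Or.inl (by rw [Set.compl_subset_iff_union]; exact h))
  have key : ∀ A B : Set E, CrossSets A B → (S ⊆ A ∨ S ⊆ Aᶜ) →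
      (Sᶜ ⊆ B ∨ Sᶜ ⊆ Bᶜ) → False := by
    intro A B hAB hA hB
    apply hAB
    rcases hA with hA | hA <;> rcases hB with hB | hB
    · right; right; right
      apply Set.eq_univ_of_forall
      intro x
      by_cases hx : x ∈ S
      · exact Or.inl (hA hx)
      · exact Or.inr (hB hx)
    · right; left
      exact (Set.compl_subset_compl.mp hB).trans hA
    · left
      exact (Set.subset_compl_comm.mp hA).trans hB
    · right; right; left
      rw [Set.eq_empty_iff_forall_notMem]
      rintro x ⟨hxA, hxB⟩
      by_cases hx : x ∈ S
      · exact hA hx hxA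
      · exact hB hx hxB
  have mainP : ∀ T, Relation.ReflTransGen (fun A B => A ∈ ℬ ∧ B ∈ ℬ ∧ CrossSets A B) S₀ T →
      (S ⊆ S₀ ∨ S ⊆ S₀ᶜ) → (S ⊆ T ∨ S ⊆ Tᶜ) := by
    intro T hchain h0
    induction hchain with
    | refl => exact h0
    | @tail b c hb r ih =>
      have hcV : c ∈ V := by rw [hV]; exact ⟨r.2.1, hb.tail r⟩
      rcases hmem c hcV with h | h
      · exact h
      · exact absurd (key b c r.2.2 ih h) not_false
  have mainQ : ∀ T, Relation.ReflTransGen (fun A B => A ∈ ℬ ∧ B ∈ ℬ ∧ CrossSets A B) S₀ T →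
      (Sᶜ ⊆ S₀ ∨ Sᶜ ⊆ S₀ᶜ) → (Sᶜ ⊆ T ∨ Sᶜ ⊆ Tᶜ) := by
    intro T hchain h0
    induction hchain with
    | refl => exact h0
    | @tail b c hb r ih =>
      have hcV : c ∈ V := by rw [hV]; exact ⟨r.2.1, hb.tail r⟩
      rcases hmem c hcV with h | h
      · exact absurd (key c b (crossSymm b c r.2.2) h ih) not_false
      · exact h
  have hS₀V : S₀ ∈ V := by rw [hV]; exact ⟨hS₀, Relation.ReflTransGen.refl⟩
  rcases hmem S₀ hS₀V with h0 | h0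
  · left; intro T hT; rw [hV] at hT; exact mainP T hT.2 h0
  · right; intro T hT; rw [hV] at hT; exact mainQ T hT.2 h0
end

section
/- Let M be a matroid and C, D disjoint subsets of E(M). Then λ_M(C ∪ D) = λ_{M/C}(D) + λ_{M∖D}(C), where λ_M denotes the connectivity function of M, M/C contraction of C, and M∖D deletion of D. -/
open Set Matroid

/-- The deletion of `D` from the matroid `M`. -/
noncomputable def Matroid.del {α : Type*} (M : Matroid α) (D : Set α) : Matroid α :=
  M ↾ (M.E \ D)

/-- The contraction of `C` in the matroid `M`, defined by duality. -/
noncomputable def Matroid.con {α : Type*} (M : Matroid α) (C : Set α) : Matroid α :=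
  (M✶ ↾ (M.E \ C))✶

/-- The contraction of the matroid `M` onto `X` (written `M.X` in the literature). -/
noncomputable def Matroid.contractOnto {α : Type*} (M : Matroid α) (X : Set α) : Matroid α :=
  (M✶ ↾ X)✶

/-- The connectivity `λ_M(X)` of `X` in the matroid `M`: the number of elements of a base `B`
of `M ↾ X` outside a base `A ⊆ B` of the contraction of `M` onto `X`. -/
noncomputable def matConn {α : Type*} (M : Matroid α) (X : Set α) : ℕ∞ :=
  ⨅ p : {p : Set α × Set α //
      (M ↾ X).IsBase p.1 ∧ (M.contractOnto X).IsBase p.2 ∧ p.2 ⊆ p.1},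
    ((p : Set α × Set α).1 \ (p : Set α × Set α).2).encard

/-!
Fix a basis `J` of `E \ (C ∪ D)`, a basis `K₁ ⊆ J` of `J` in `M ／ C`, and a basis `K₂ ⊆ K₁` of
`K₁` in `M ／ C ／ D`. Whenever `J` is a basis of `E \ X` and `K` a basis of `J` in `M ／ X`, we
have `λ_M(X) = |J \ K|`: for every pair `(P, A)` in the infimum defining `matConn`, both `A ∪ J`
and `K ∪ P` are bases of `P ∪ J`, and all bases of a set leave equally many of its elements
uncovered. Hence the three connectivities are `|J \ K₂|`, `|K₁ \ K₂|` and `|J \ K₁|`, and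
`K₂ ⊆ K₁ ⊆ J`.
-/

namespace Matroid

variable {α : Type*} {M : Matroid α} {C I I' J K X Y Z : Set α}

lemma con_eq_contract (M : Matroid α) (C : Set α) : M.con C = M ／ C := rfl

lemma del_eq_delete (M : Matroid α) (D : Set α) : M.del D = M ＼ D := rfl

lemma contractOnto_eq_contract (hX : X ⊆ M.E) : M.contractOnto X = M ／ (M.E \ X) := by
  rw [contractOnto, contract, delete, dual_ground, sdiff_sdiff_cancel_left hX]

lemma IsBasis.encard_sdiff_eq (hI : M.IsBasis I X) (hI' : M.IsBasis I' X) :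
    (X \ I).encard = (X \ I').encard := by
  have hcomm := hI.isBase_restrict.encard_sdiff_comm hI'.isBase_restrict
  have hsplit : ∀ {A B : Set α}, B ⊆ X → (X \ A).encard = (X \ (A ∪ B)).encard + (B \ A).encard :=
    fun {A B} hB ↦ by
      rw [← encard_union_eq (by tauto_set)]
      congr 1
      tauto_set
  rw [hsplit (A := I) hI'.subset, hsplit (A := I') hI.subset, union_comm, hcomm]

lemma IsBasis.union_isBasis_union_of_contract_isBasis (hI : M.IsBasis I Y)
    (hK : (M ／ Y).IsBasis K X) : M.IsBasis (K ∪ I) (X ∪ I) := by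
  rw [hI.contract_eq_contract_delete, delete_isBasis_iff] at hK
  exact hI.indep.union_isBasis_union_of_contract_isBasis hK.1

lemma IsBasis.contract_isBasis_trans (hJ : M.IsBasis J Z) (hK : (M ／ C).IsBasis K J)
    (hZC : Disjoint Z C) : (M ／ C).IsBasis K Z := by
  refine hK.isBasis_of_closure_eq_closure (hK.subset.trans hJ.subset) ?_
    (subset_sdiff.2 ⟨hJ.subset_ground, hZC⟩)
  rw [contract_closure_eq, contract_closure_eq, closure_union_congr_left hJ.closure_eq_closure]

end Matroid

lemma matConn_eq_encard_sdiff {α : Type*} {M : Matroid α} {X J K : Set α} (hX : X ⊆ M.E)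
    (hJ : M.IsBasis J (M.E \ X)) (hK : (M ／ X).IsBasis K J) :
    matConn M X = (J \ K).encard := by
  have hvalue : ∀ P A, (M ↾ X).IsBase P → (M.contractOnto X).IsBase A → A ⊆ P →
      (P \ A).encard = (J \ K).encard := by
    intro P A hP hA hAP
    rw [isBase_restrict_iff hX] at hP
    have hAX : (M ／ (M.E \ X)).IsBasis A X := by
      simpa [contractOnto_eq_contract hX, sdiff_sdiff_cancel_left hX] using hA.isBasis_ground
    have hAJ : M.IsBasis (A ∪ J) (P ∪ J) :=
      (hJ.union_isBasis_union_of_contract_isBasis hAX).isBasis_subset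
        (union_subset_union_left _ hAP) (union_subset_union_left _ hP.subset)
    have hKP : M.IsBasis (K ∪ P) (P ∪ J) := by
      simpa only [union_comm J] using hP.union_isBasis_union_of_contract_isBasis hK
    have hPJ : Disjoint P J := (disjoint_sdiff_right.mono_left hP.subset).mono_right hJ.subset
    calc (P \ A).encard = ((P ∪ J) \ (A ∪ J)).encard := by congr 1; tauto_set
      _ = ((P ∪ J) \ (K ∪ P)).encard := hAJ.encard_sdiff_eq hKP
      _ = (J \ K).encard := by congr 1; tauto_set
  obtain ⟨A, hA⟩ := (M.contractOnto X).exists_isBase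
  obtain ⟨P, hP, hAP⟩ := (contractOnto_eq_contract hX ▸ hA.indep).of_contract
    |>.subset_isBasis_of_subset hA.subset_ground hX
  have : Nonempty {p : Set α × Set α //
      (M ↾ X).IsBase p.1 ∧ (M.contractOnto X).IsBase p.2 ∧ p.2 ⊆ p.1} :=
    ⟨⟨(P, A), hP.isBase_restrict, hA, hAP⟩⟩
  rw [matConn, iInf_congr fun p ↦ hvalue _ _ p.2.1 p.2.2.1 p.2.2.2, iInf_const]

/-- For disjoint `C, D ⊆ E(M)`: `λ_M(C ∪ D) = λ_{M/C}(D) + λ_{M∖D}(C)`. -/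
theorem stmt19 {α : Type*} (M : Matroid α) (C D : Set α)
    (hC : C ⊆ M.E) (hD : D ⊆ M.E) (hCD : Disjoint C D) :
    matConn M (C ∪ D) = matConn (M.con C) D + matConn (M.del D) C := by
  rw [con_eq_contract, del_eq_delete]
  obtain ⟨J, hJ⟩ := M.exists_isBasis (M.E \ (C ∪ D))
  have hJ_sub : J ⊆ M.E \ (C ∪ D) := hJ.subset
  obtain ⟨K₁, hK₁⟩ := (M ／ C).exists_isBasis J
    (hJ_sub.trans (sdiff_subset_sdiff_right subset_union_left))
  obtain ⟨K₂, hK₂⟩ := (M ／ C ／ D).exists_isBasis K₁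
    (hK₁.subset.trans (hJ_sub.trans (by simp)))
  have hK₁_con : (M ／ C).IsBasis K₁ ((M ／ C).E \ D) := by
    rw [contract_ground, Set.sdiff_sdiff]
    exact hJ.contract_isBasis_trans hK₁ (by tauto_set)
  have hK₂_con : (M ／ (C ∪ D)).IsBasis K₂ J := by
    rw [← contract_contract]
    exact hK₁.contract_isBasis_trans hK₂ (by tauto_set)
  have hJ_del : (M ＼ D).IsBasis J ((M ＼ D).E \ C) := by
    rw [delete_ground, Set.sdiff_sdiff, union_comm]
    exact hJ.delete (by tauto_set)
  have hK₁_del : (M ＼ D ／ C).IsBasis K₁ J := by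
    rw [← contract_delete_comm M hCD]
    exact hK₁.delete (by tauto_set)
  rw [matConn_eq_encard_sdiff (union_subset hC hD) hJ hK₂_con,
    matConn_eq_encard_sdiff (subset_sdiff.2 ⟨hD, hCD.symm⟩) hK₁_con hK₂,
    matConn_eq_encard_sdiff (subset_sdiff.2 ⟨hC, hCD⟩) hJ_del hK₁_del,
    ← sdiff_union_sdiff_cancel hK₁.subset hK₂.subset, encard_union_eq (by tauto_set), add_comm]
end
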